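/- arXiv:2012.07348 — 5 statements merged into one kernel-verified Lean document; each statement's English description precedes it below -/
import Mathlib

section
/- In a two-sided matching market with N players and L arms (N ≤ L), where every arm has the same strict preference ordering over players (players are globally ranked) and each player has a strict preference ordering over arms, there exists exactly one stable matching. -/
/-- Any nonempty finset has a top element w.r.t. a transitive, total (on distinct elements)
relation. -/
theorem exists_top_rel {α : Type*} [DecidableEq α] (r : α → α → Prop) (ht : Transitive r)
    (htot : ∀ a b : α, a ≠ b → r a b ∨ r b a) :
    ∀ s : Finset α, s.Nonempty → ∃ m ∈ s, ∀ b ∈ s, b ≠ m → r m b := by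
  intro s
  induction s using Finset.induction_on with
  | empty => intro h; exact absurd h (by simp)
  | @insert a s ha ih =>
    intro _
    by_cases hs : s.Nonempty
    · obtain ⟨m, hm, hmax⟩ := ih hs
      have ham : a ≠ m := fun h => ha (h ▸ hm)
      rcases htot a m ham with hr | hr
      · refine ⟨a, Finset.mem_insert_self _ _, ?_⟩
        intro b hb hba
        rcases Finset.mem_insert.mp hb with rfl | hbs
        · exact absurd rfl hba
        · by_cases hbm : b = m
          · exact hbm ▸ hr
          · exact ht hr (hmax b hbs hbm)
      · refine ⟨m, Finset.mem_insert_of_mem hm, ?_⟩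
        intro b hb hbm
        rcases Finset.mem_insert.mp hb with rfl | hbs
        · exact hr
        · exact hmax b hbs hbm
    · refine ⟨a, Finset.mem_insert_self _ _, ?_⟩
      intro b hb hba
      rcases Finset.mem_insert.mp hb with rfl | hbs
      · exact absurd rfl hba
      · exact absurd ⟨b, hbs⟩ hs

theorem avail_nonempty (L p : ℕ) (hpL : p < L)
    (f : {x // x ∈ Finset.range p} → Fin L) :
    ((Finset.univ : Finset (Fin L)) \ (Finset.range p).attach.image f).Nonempty := by
  have hc : ((Finset.range p).attach.image f).card ≤ p :=
    le_trans Finset.card_image_le (by simp)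
  have hcard := Finset.card_sdiff_of_subset (Finset.subset_univ ((Finset.range p).attach.image f))
  rw [Finset.card_univ, Fintype.card_fin] at hcard
  refine Finset.card_pos.mp ?_
  omega

/-- Serial dictatorship: player `p` takes the best arm not taken by earlier players. -/
noncomputable def muAux (N L : ℕ) (r : Fin N → Fin L → Fin L → Prop)
    (H : ∀ p : Fin N, ∀ s : Finset (Fin L), s.Nonempty →
      ∃ m ∈ s, ∀ b ∈ s, b ≠ m → r p m b)
    (hNL : N ≤ L) : (p : ℕ) → p < N → Fin L
  | p, hp =>
    (H ⟨p, hp⟩ (Finset.univ \ (Finset.range p).attach.image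
        (fun q => muAux N L r H hNL q.1 ((Finset.mem_range.mp q.2).trans hp)))
      (avail_nonempty L p (lt_of_lt_of_le hp hNL) _)).choose
termination_by p _ => p
decreasing_by all_goals simpa using Finset.mem_range.mp q.2

theorem muAux_spec (N L : ℕ) (r : Fin N → Fin L → Fin L → Prop)
    (H : ∀ p : Fin N, ∀ s : Finset (Fin L), s.Nonempty →
      ∃ m ∈ s, ∀ b ∈ s, b ≠ m → r p m b)
    (hNL : N ≤ L) (p : ℕ) (hp : p < N) :
    muAux N L r H hNL p hp ∈ (Finset.univ \ (Finset.range p).attach.image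
        (fun q => muAux N L r H hNL q.1 ((Finset.mem_range.mp q.2).trans hp))) ∧
    ∀ b ∈ (Finset.univ \ (Finset.range p).attach.image
        (fun q => muAux N L r H hNL q.1 ((Finset.mem_range.mp q.2).trans hp))),
      b ≠ muAux N L r H hNL p hp → r ⟨p, hp⟩ (muAux N L r H hNL p hp) b := by
  rw [muAux]
  exact (H ⟨p, hp⟩ _ (avail_nonempty L p (lt_of_lt_of_le hp hNL) _)).choose_spec


/-- In a two-sided matching market with `N` players and `L` arms (`N ≤ L`), where all arms
share the same strict preference over players (players are globally ranked, encoded by the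
index order on `Fin N`: arm `a` prefers `p` to `q` iff `p < q`) and each player has a strict
total preference over arms, there is exactly one stable matching.  A matching is an injective
assignment of players to arms; it is stable if there is no blocking pair `(p, a)`, i.e., no
player `p` and arm `a` such that `p` strictly prefers `a` to its match and `a` is either
unmatched or matched to a player that `a` ranks strictly below `p`. -/
theorem unique_stable_matching_globally_ranked
    (N L : ℕ) (hNL : N ≤ L)
    (prefersArm : Fin N → Fin L → Fin L → Prop)
    -- `prefersArm p a b` : player `p` strictly prefers arm `a` over arm `b`
    (hlin : ∀ p, IsStrictTotalOrder (Fin L) (prefersArm p)) :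
    ∃! μ : Fin N → Fin L,
      Function.Injective μ ∧
      ¬ ∃ (p : Fin N) (a : Fin L),
        prefersArm p a (μ p) ∧
        ((∀ q : Fin N, μ q ≠ a) ∨ (∃ q : Fin N, μ q = a ∧ p < q)) := by
  have H : ∀ p : Fin N, ∀ s : Finset (Fin L), s.Nonempty →
      ∃ m ∈ s, ∀ b ∈ s, b ≠ m → prefersArm p m b := by
    intro p
    exact exists_top_rel _ (fun a b c => (hlin p).trans a b c)
      (fun a b hab => by
        by_contra hc
        push_neg at hc
        exact hab ((hlin p).trichotomous a b hc.1 hc.2))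
  have hasym : ∀ p a b, prefersArm p a b → prefersArm p b a → False := by
    intro p a b h1 h2
    exact (hlin p).irrefl a ((hlin p).trans a b a h1 h2)
  set μ : Fin N → Fin L := fun p => muAux N L prefersArm H hNL p.1 p.2 with hμ
  -- μ p differs from all earlier choices
  have hfresh : ∀ (p : Fin N) (q : Fin N), q < p → μ q ≠ μ p := by
    intro p q hqp heq
    have hs := (muAux_spec N L prefersArm H hNL p.1 p.2).1
    rw [Finset.mem_sdiff] at hs
    refine hs.2 (Finset.mem_image.mpr ⟨⟨q.1, Finset.mem_range.mpr hqp⟩, Finset.mem_attach _ _, ?_⟩)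
    simpa using heq
  -- maximality
  have hmax : ∀ (p : Fin N) (a : Fin L), (∀ q : Fin N, q < p → μ q ≠ a) → a ≠ μ p →
      prefersArm p (μ p) a := by
    intro p a havail hne
    have hs := (muAux_spec N L prefersArm H hNL p.1 p.2).2
    refine hs a (Finset.mem_sdiff.mpr ⟨Finset.mem_univ _, ?_⟩) hne
    intro hmem
    obtain ⟨q, _, hq⟩ := Finset.mem_image.mp hmem
    exact havail ⟨q.1, (Finset.mem_range.mp q.2).trans p.2⟩
      (by exact Fin.mk_lt_mk.mpr (Finset.mem_range.mp q.2)) hq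
  have hinj : Function.Injective μ := by
    intro p q h
    by_contra hne
    rcases lt_or_gt_of_ne (fun hh : p = q => hne hh) with hlt | hgt
    · exact hfresh q p hlt h
    · exact hfresh p q hgt h.symm
  refine ⟨μ, ⟨hinj, ?_⟩, ?_⟩
  · rintro ⟨p, a, hpref, hblock⟩
    have hne : a ≠ μ p := by
      rintro rfl; exact (hlin p).irrefl _ hpref
    have hexq : ∃ q : Fin N, q < p ∧ μ q = a := by
      by_contra hno
      push_neg at hno
      exact hasym p a (μ p) hpref (hmax p a hno hne)
    obtain ⟨q, hqp, hqa⟩ := hexq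
    rcases hblock with hnone | ⟨q', hq', hpq'⟩
    · exact hnone q hqa
    · have : q' = q := hinj (hq'.trans hqa.symm)
      exact absurd (this ▸ hpq') (not_lt.mpr hqp.le)
  · -- uniqueness
    rintro ν ⟨hνinj, hνstable⟩
    have key : ∀ n : ℕ, ∀ hn : n < N, ν ⟨n, hn⟩ = μ ⟨n, hn⟩ := by
      intro n
      induction n using Nat.strong_induction_on with
      | _ n ih =>
        intro hn
        set p : Fin N := ⟨n, hn⟩ with hp
        by_contra hne
        -- ν p is available at step p
        have havail : ∀ q : Fin N, q < p → μ q ≠ ν p := by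
          intro q hqp heq
          have : ν q = ν p := (ih q.1 hqp q.2).symm ▸ heq
          exact absurd (hνinj this) (Fin.ne_of_lt hqp)
        have hpref : prefersArm p (μ p) (ν p) := hmax p (ν p) havail hne
        refine hνstable ⟨p, μ p, hpref, ?_⟩
        by_cases hex : ∃ q : Fin N, ν q = μ p
        · obtain ⟨q, hq⟩ := hex
          refine Or.inr ⟨q, hq, ?_⟩
          rcases lt_trichotomy p q with h | h | h
          · exact h
          · exact absurd (h ▸ hq) hne
          · exfalso
            have : ν q = μ q := ih q.1 h q.2
            exact hfresh p q h (this ▸ hq)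
        · push_neg at hex
          exact Or.inl hex
    funext p
    exact (key p.1 p.2).trans (by simp [hμ])
end

section
/- Under the globally-ranked-players assumption with λ = 0, the event that player p_k is unmatched at time t (loses a conflict) is contained in the union over all pairs (j, l) with 1 ≤ j < k and j < l ≤ L, and times t - k ≤ t' ≤ t, of the events Λ^{(j)}_l(t'). -/
/-- Descent lemma: if player `i` does not pull its stable arm at time `s`, then some
player `j ≤ i` attempts an arm of strictly larger index while its own stable arm is
plausible, at some time in `[s - i, s]`. -/
theorem ca_ucb_desc
    {Ω : Type*} {N L : ℕ} (hNL : N ≤ L)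
    (attempt : ℕ → Fin N → Ω → Fin L)
    (pull : ℕ → Fin N → Ω → Option (Fin L))
    (plausible : ℕ → Fin N → Ω → Set (Fin L))
    (hwin : ∀ t (i : Fin N) ω (a : Fin L),
      pull t i ω = some a ↔ (attempt t i ω = a ∧ ∀ j : Fin N, j < i → attempt t j ω ≠ a))
    (hplaus : ∀ t (i : Fin N) ω (a : Fin L),
      a ∈ plausible t i ω ↔ ∀ j : Fin N, j < i → pull (t - 1) j ω ≠ some a)
    (hatt : ∀ t (i : Fin N) ω, attempt t i ω ∈ plausible t i ω)
    (ω : Ω) :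
    ∀ n : ℕ, ∀ i : Fin N, (i : ℕ) ≤ n → ∀ s : ℕ,
      pull s i ω ≠ some (Fin.castLE hNL i) →
      ∃ (j : Fin N) (l : Fin L) (t' : ℕ), (j : ℕ) ≤ (i : ℕ) ∧ (j : ℕ) < (l : ℕ) ∧
        s - (i : ℕ) ≤ t' ∧ t' ≤ s ∧ attempt t' j ω = l ∧
        Fin.castLE hNL j ∈ plausible t' j ω := by
  intro n
  induction n using Nat.strong_induction_on with
  | _ n ih =>
    intro i hi s hne
    set b := attempt s i ω with hbdef
    have hb : b ∈ plausible s i ω := hatt s i ω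
    rcases lt_trichotomy ((b : ℕ)) ((i : ℕ)) with hlt | heqc | hgt
    · -- player i attempts an arm of strictly smaller index m = (b : ℕ)
      have hmN : (b : ℕ) < N := lt_trans hlt i.isLt
      set m : Fin N := ⟨(b : ℕ), hmN⟩ with hmdef
      have hcast : Fin.castLE hNL m = b := by
        apply Fin.ext; simp [hmdef]
      have hmlt : m < i := by
        simpa [Fin.lt_def, hmdef] using hlt
      have hnp : pull (s - 1) m ω ≠ some b :=
        (hplaus s i ω b).mp hb m hmlt
      have hnp' : pull (s - 1) m ω ≠ some (Fin.castLE hNL m) := by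
        rw [hcast]; exact hnp
      obtain ⟨j, l, t', hji, hjl, ht1, ht2, ha, hp⟩ :=
        ih (m : ℕ) (lt_of_lt_of_le (by simpa [hmdef] using hlt) hi) m le_rfl (s - 1) hnp'
      refine ⟨j, l, t', ?_, hjl, ?_, ?_, ha, hp⟩
      · exact le_trans hji (le_of_lt (by simpa [hmdef] using hlt))
      · have : (m : ℕ) < (i : ℕ) := by simpa [hmdef] using hlt
        omega
      · omega
    · -- player i attempts its own stable arm but does not pull it: it loses a conflict
      have hbeq : b = Fin.castLE hNL i := by
        apply Fin.ext; simpa using heqc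
      have hpn : pull s i ω = none := by
        cases hps : pull s i ω with
        | none => rfl
        | some c =>
          exfalso
          have := ((hwin s i ω c).mp hps).1
          rw [← hbdef] at this
          exact hne (by rw [hps, ← this, hbeq])
      have hnot : ¬ (attempt s i ω = b ∧ ∀ j : Fin N, j < i → attempt s j ω ≠ b) := by
        intro h
        exact hne (by rw [← hbeq]; exact (hwin s i ω b).mpr h)
      push_neg at hnot
      obtain ⟨j₁, hj₁i, hj₁a⟩ := hnot rfl.symm
      by_cases hp : Fin.castLE hNL j₁ ∈ plausible s j₁ ω
      · exact ⟨j₁, b, s, le_of_lt hj₁i, by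
          simpa using lt_of_lt_of_le (Fin.lt_def.mp hj₁i) (le_of_eq heqc.symm),
          Nat.sub_le _ _, le_rfl, hj₁a, hp⟩
      · rw [hplaus] at hp
        push_neg at hp
        obtain ⟨j₂, hj₂j₁, hj₂p⟩ := hp
        have hj₂ne : pull (s - 1) j₂ ω ≠ some (Fin.castLE hNL j₂) := by
          rw [hj₂p]
          intro h
          have : (j₁ : ℕ) = (j₂ : ℕ) := by
            have := Option.some.inj h
            simpa using congrArg (fun x : Fin L => (x : ℕ)) this
          exact absurd this (by have := Fin.lt_def.mp hj₂j₁; omega)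
        have hj₂i : (j₂ : ℕ) < (i : ℕ) :=
          lt_trans (Fin.lt_def.mp hj₂j₁) (Fin.lt_def.mp hj₁i)
        obtain ⟨j, l, t', hji, hjl, ht1, ht2, ha, hpj⟩ :=
          ih (j₂ : ℕ) (lt_of_lt_of_le hj₂i hi) j₂ le_rfl (s - 1) hj₂ne
        exact ⟨j, l, t', le_trans hji (le_of_lt hj₂i), hjl, by omega, by omega, ha, hpj⟩
    · -- player i attempts an arm of strictly larger index
      by_cases hp : Fin.castLE hNL i ∈ plausible s i ω
      · exact ⟨i, b, s, le_rfl, hgt, Nat.sub_le _ _, le_rfl, rfl, hp⟩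
      · rw [hplaus] at hp
        push_neg at hp
        obtain ⟨j₂, hj₂i, hj₂p⟩ := hp
        have hj₂ne : pull (s - 1) j₂ ω ≠ some (Fin.castLE hNL j₂) := by
          rw [hj₂p]
          intro h
          have : (i : ℕ) = (j₂ : ℕ) := by
            have := Option.some.inj h
            simpa using congrArg (fun x : Fin L => (x : ℕ)) this
          exact absurd this (by have := Fin.lt_def.mp hj₂i; omega)
        have hj₂i' : (j₂ : ℕ) < (i : ℕ) := Fin.lt_def.mp hj₂i
        obtain ⟨j, l, t', hji, hjl, ht1, ht2, ha, hpj⟩ :=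
          ih (j₂ : ℕ) (lt_of_lt_of_le hj₂i' hi) j₂ le_rfl (s - 1) hj₂ne
        exact ⟨j, l, t', le_trans hji (le_of_lt hj₂i'), hjl, by omega, by omega, ha, hpj⟩

/-- Conflicts lemma for CA-UCB with λ = 0 under globally ranked players.
Same model as the suboptimal-pulls lemma: players `Fin N`, arms `Fin L` indexed so the
stable matching is `{(p_i, a_i)}` (via `Fin.castLE`); all arms prefer lower-indexed
players; `attempt`, `pull`, `plausible` describe the dynamics.  The event that player
`k` is unmatched at time `t` (`pull t k = none`, i.e. it loses a conflict) is contained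
in the union, over pairs `(j, l)` with `1 ≤ j < k` and `j < l ≤ L` and times
`t - k ≤ t' ≤ t`, of the events
`Λ^{(j)}_l(t') = {player j attempts a_l at time t' while a_j is in its plausible set}`. -/
theorem ca_ucb_conflicts
    {Ω : Type*} (N L : ℕ) (hNL : N ≤ L)
    (pref : Fin N → Fin L → Fin L → Prop)
    (attempt : ℕ → Fin N → Ω → Fin L)
    (pull : ℕ → Fin N → Ω → Option (Fin L))
    (plausible : ℕ → Fin N → Ω → Set (Fin L))
    (hwin : ∀ t (i : Fin N) ω (a : Fin L),
      pull t i ω = some a ↔ (attempt t i ω = a ∧ ∀ j : Fin N, j < i → attempt t j ω ≠ a))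
    (hplaus : ∀ t (i : Fin N) ω (a : Fin L),
      a ∈ plausible t i ω ↔ ∀ j : Fin N, j < i → pull (t - 1) j ω ≠ some a)
    (hatt : ∀ t (i : Fin N) ω, attempt t i ω ∈ plausible t i ω)
    (hstablepref : ∀ u m : Fin N, u < m →
      pref u (Fin.castLE hNL u) (Fin.castLE hNL m))
    (k : Fin N) (t : ℕ) :
    {ω | pull t k ω = none} ⊆
      ⋃ (j : Fin N) (_ : j < k) (l : Fin L) (_ : (j : ℕ) < (l : ℕ))
        (t' : ℕ) (_ : t - (k : ℕ) ≤ t') (_ : t' ≤ t),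
        {ω | attempt t' j ω = l ∧ Fin.castLE hNL j ∈ plausible t' j ω} := by
  intro ω hω
  simp only [Set.mem_setOf_eq] at hω
  simp only [Set.mem_iUnion, Set.mem_setOf_eq]
  set b := attempt t k ω with hbdef
  have hb : b ∈ plausible t k ω := hatt t k ω
  -- player k loses to some higher-ranked player j₁ attempting the same arm
  have hnot : ¬ (attempt t k ω = b ∧ ∀ j : Fin N, j < k → attempt t j ω ≠ b) := by
    intro h
    have := (hwin t k ω b).mpr h
    rw [hω] at this
    exact Option.some_ne_none b this.symm
  push_neg at hnot
  obtain ⟨j₁, hj₁k, hj₁a⟩ := hnot rfl.symm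
  rcases lt_or_ge ((j₁ : ℕ)) ((b : ℕ)) with hlt | hle
  · -- the winner j₁ attempts an arm of larger index
    by_cases hp : Fin.castLE hNL j₁ ∈ plausible t j₁ ω
    · exact ⟨j₁, hj₁k, b, hlt, t, Nat.sub_le _ _, le_rfl, hj₁a, hp⟩
    · rw [hplaus] at hp
      push_neg at hp
      obtain ⟨j₂, hj₂j₁, hj₂p⟩ := hp
      have hj₂ne : pull (t - 1) j₂ ω ≠ some (Fin.castLE hNL j₂) := by
        rw [hj₂p]
        intro h
        have : (j₁ : ℕ) = (j₂ : ℕ) := by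
          have := Option.some.inj h
          simpa using congrArg (fun x : Fin L => (x : ℕ)) this
        exact absurd this (by have := Fin.lt_def.mp hj₂j₁; omega)
      obtain ⟨j, l, t', hji, hjl, ht1, ht2, ha, hpj⟩ :=
        ca_ucb_desc hNL attempt pull plausible hwin hplaus hatt ω
          (j₂ : ℕ) j₂ le_rfl (t - 1) hj₂ne
      have hj₂k : (j₂ : ℕ) < (k : ℕ) :=
        lt_trans (Fin.lt_def.mp hj₂j₁) (Fin.lt_def.mp hj₁k)
      refine ⟨j, Fin.lt_def.mpr (lt_of_le_of_lt hji hj₂k), l, hjl, t', by omega, by omega,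
        ha, hpj⟩
  · -- the common arm b has index ≤ j₁ < k; consider its owner m
    have hmN : (b : ℕ) < N := lt_of_le_of_lt hle j₁.isLt
    set m : Fin N := ⟨(b : ℕ), hmN⟩ with hmdef
    have hcast : Fin.castLE hNL m = b := by
      apply Fin.ext; simp [hmdef]
    have hmk : m < k := Fin.lt_def.mpr (lt_of_le_of_lt (by simpa [hmdef] using hle)
      (Fin.lt_def.mp hj₁k))
    have hnp : pull (t - 1) m ω ≠ some (Fin.castLE hNL m) := by
      rw [hcast]
      exact (hplaus t k ω b).mp hb m hmk
    obtain ⟨j, l, t', hji, hjl, ht1, ht2, ha, hpj⟩ :=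
      ca_ucb_desc hNL attempt pull plausible hwin hplaus hatt ω
        (m : ℕ) m le_rfl (t - 1) hnp
    have hmk' : (m : ℕ) < (k : ℕ) := Fin.lt_def.mp hmk
    exact ⟨j, Fin.lt_def.mpr (lt_of_le_of_lt hji hmk'), l, hjl, t', by omega, by omega,
      ha, hpj⟩
end

section
/- In the globally ranked players case with λ = 0, the auxiliary inclusion holds: for every player p_k, the union over m = 1, ..., k-1 of the events {p_k attempts arm a_m at time t} is contained in the union over pairs (j, l) with 1 ≤ j < k and j < l ≤ L, and times t - k ≤ t' ≤ t, of the events Λ^{(j)}_l(t'). -/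
/-- Auxiliary inclusion for CA-UCB with λ = 0 under globally ranked players (same model as
the suboptimal-pulls lemma): for every player `k`, the union over `m = 1, ..., k-1` of the
events `{p_k attempts arm a_m at time t}` is contained in the union, over pairs `(j, l)`
with `1 ≤ j < k` and `j < l ≤ L` and times `t - k ≤ t' ≤ t`, of the events
`Λ^{(j)}_l(t') = {player j attempts a_l at time t' while a_j is in its plausible set}`. -/
theorem ca_ucb_superoptimal_attempts
    {Ω : Type*} (N L : ℕ) (hNL : N ≤ L)
    (pref : Fin N → Fin L → Fin L → Prop)
    (attempt : ℕ → Fin N → Ω → Fin L)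
    (pull : ℕ → Fin N → Ω → Option (Fin L))
    (plausible : ℕ → Fin N → Ω → Set (Fin L))
    (hwin : ∀ t (i : Fin N) ω (a : Fin L),
      pull t i ω = some a ↔ (attempt t i ω = a ∧ ∀ j : Fin N, j < i → attempt t j ω ≠ a))
    (hplaus : ∀ t (i : Fin N) ω (a : Fin L),
      a ∈ plausible t i ω ↔ ∀ j : Fin N, j < i → pull (t - 1) j ω ≠ some a)
    (hatt : ∀ t (i : Fin N) ω, attempt t i ω ∈ plausible t i ω)
    (hstablepref : ∀ u m : Fin N, u < m →
      pref u (Fin.castLE hNL u) (Fin.castLE hNL m))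
    (k : Fin N) (t : ℕ) :
    (⋃ (m : Fin N) (_ : m < k), {ω | attempt t k ω = Fin.castLE hNL m}) ⊆
      ⋃ (j : Fin N) (_ : j < k) (l : Fin L) (_ : (j : ℕ) < (l : ℕ))
        (t' : ℕ) (_ : t - (k : ℕ) ≤ t') (_ : t' ≤ t),
        {ω | attempt t' j ω = l ∧ Fin.castLE hNL j ∈ plausible t' j ω} := by
  intro ω hω
  simp only [Set.mem_iUnion, Set.mem_setOf_eq] at hω ⊢
  obtain ⟨m, hmk, hatt0⟩ := hω
  -- arithmetic helpers (proved in a clean context to keep `omega` happy)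
  have harith1 : ∀ a b c s' : ℕ, b < c → c ≤ a → t - (a - c) ≤ s' → t - (a - b) ≤ s' - 1 := by
    intro a b c s' h1 h2 h3; omega
  have harith2 : ∀ a c s' : ℕ, c ≤ a → t - (a - c) ≤ s' → t - a ≤ s' := by
    intro a c s' h1 h2; omega
  -- Auxiliary recursion, by strong induction on the player index.
  have aux : ∀ n : ℕ, ∀ s : ℕ, ∀ i : Fin N, ∀ l : Fin L, (i : ℕ) = n →
      attempt s i ω = l → t - ((k : ℕ) - (i : ℕ)) ≤ s → s ≤ t →
      (((i : ℕ) < (k : ℕ) ∧ (i : ℕ) < (l : ℕ)) ∨ ((l : ℕ) < (i : ℕ) ∧ (i : ℕ) ≤ (k : ℕ))) →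
      ∃ j : Fin N, j < k ∧ ∃ l' : Fin L, (j : ℕ) < (l' : ℕ) ∧ ∃ t', t - (k : ℕ) ≤ t' ∧
        t' ≤ t ∧ attempt t' j ω = l' ∧ Fin.castLE hNL j ∈ plausible t' j ω := by
    intro n
    induction n using Nat.strong_induction_on with
    | _ n ih =>
      intro s i l hin hal hs1 hs2 hcase
      have hs2' : s - 1 ≤ t := le_trans (Nat.sub_le s 1) hs2
      rcases hcase with ⟨hik, hil⟩ | ⟨hli, hik⟩
      · -- player i attempts an arm with larger index
        by_cases hpl : Fin.castLE hNL i ∈ plausible s i ω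
        · exact ⟨i, Fin.lt_def.mpr hik, l, hil, s,
            harith2 (k : ℕ) (i : ℕ) s (le_of_lt hik) hs1, hs2, hal, hpl⟩
        · -- a_i not plausible: some j < i pulled a_i at time s-1
          rw [hplaus] at hpl
          push_neg at hpl
          obtain ⟨j, hji, hpull⟩ := hpl
          have hattj : attempt (s - 1) j ω = Fin.castLE hNL i := ((hwin _ _ _ _).mp hpull).1
          have hji' : (j : ℕ) < (i : ℕ) := Fin.lt_def.mp hji
          have hn : (j : ℕ) < n := hin ▸ hji'
          refine ih (j : ℕ) hn (s - 1) j (Fin.castLE hNL i) rfl hattj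
            (harith1 (k : ℕ) (j : ℕ) (i : ℕ) s hji' (le_of_lt hik) hs1) hs2' ?_
          left
          exact ⟨lt_trans hji' hik, by simpa using hji'⟩
      · -- player i attempts an arm a_m with m' < i
        have hiN : (i : ℕ) < N := i.isLt
        have hlN : (l : ℕ) < N := lt_trans hli hiN
        have hm'i : (⟨(l : ℕ), hlN⟩ : Fin N) < i := hli
        -- l is plausible for i, so m' did not pull l at time s-1
        have hpll := (hplaus s i ω l).mp (hal ▸ hatt s i ω)
        have hnp : pull (s - 1) (⟨(l : ℕ), hlN⟩ : Fin N) ω ≠ some l := hpll _ hm'i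
        by_cases hc : attempt (s - 1) (⟨(l : ℕ), hlN⟩ : Fin N) ω = l
        · -- m' attempted l but lost: some j < m' attempted l
          have hw : ¬ (attempt (s-1) (⟨(l : ℕ), hlN⟩ : Fin N) ω = l ∧
              ∀ j : Fin N, j < (⟨(l : ℕ), hlN⟩ : Fin N) → attempt (s-1) j ω ≠ l) := by
            rw [← hwin]; exact hnp
          push_neg at hw
          obtain ⟨j, hjm, hattj⟩ := hw hc
          have hjl : (j : ℕ) < (l : ℕ) := Fin.lt_def.mp hjm
          have hji' : (j : ℕ) < (i : ℕ) := lt_trans hjl hli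
          have hn : (j : ℕ) < n := hin ▸ hji'
          refine ih (j : ℕ) hn (s - 1) j l rfl hattj
            (harith1 (k : ℕ) (j : ℕ) (i : ℕ) s hji' hik hs1) hs2' ?_
          left
          exact ⟨lt_of_lt_of_le hji' hik, hjl⟩
        · -- m' attempted some other arm c
          have hn : (l : ℕ) < n := hin ▸ hli
          have htb := harith1 (k : ℕ) (l : ℕ) (i : ℕ) s hli hik hs1
          rcases lt_trichotomy ((attempt (s - 1) (⟨(l : ℕ), hlN⟩ : Fin N) ω : ℕ)) ((l : ℕ))
            with h1 | h1 | h1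
          · -- c has smaller index: recurse, case B
            refine ih (l : ℕ) hn (s - 1) (⟨(l : ℕ), hlN⟩ : Fin N) _ rfl rfl htb hs2' ?_
            right
            exact ⟨h1, le_trans (le_of_lt hli) hik⟩
          · -- same index: c = l, contradiction
            exact absurd (Fin.ext h1) hc
          · -- c has larger index: recurse, case A
            refine ih (l : ℕ) hn (s - 1) (⟨(l : ℕ), hlN⟩ : Fin N) _ rfl rfl htb hs2' ?_
            left
            exact ⟨lt_of_lt_of_le hli hik, h1⟩
  have hmk' : (m : ℕ) < (k : ℕ) := Fin.lt_def.mp hmk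
  obtain ⟨j, hj, l', hl', t', h1, h2, h3, h4⟩ :=
    aux (k : ℕ) t k (Fin.castLE hNL m) rfl hatt0 (by simp) le_rfl
      (Or.inr ⟨by simpa using hmk', le_rfl⟩)
  exact ⟨j, hj, l', hl', t', h1, h2, h3, h4⟩
end

section
/- Preservation of stability: in the CA-UCB dynamics with arbitrary preferences, if the attempted-action profile m_t at time t is a stable matching, then on the event E_{t+1} — that for every player the arm of highest true mean reward in its plausible set at time t+1 coincides with the arm of highest UCB in that plausible set — the attempted-action profile at time t+1 equals m_t, and in particular is stable. -/
/-- Preservation of stability for CA-UCB with arbitrary preferences.  Players `Fin N`,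
arms `Fin L`; player preferences are given by distinct mean rewards `μ`, arm preferences
by strict total orders `armpref a` (`armpref a p q` : arm `a` strictly prefers `p` to `q`).
`m` is the attempted-action profile at time `t` and `m'` the one at time `t + 1`;
`pull` records the successful pulls at time `t` (the attempting player most preferred by
the arm wins), and `plausible p` is `p`'s plausible set at time `t + 1` (arms not pulled
at time `t` by a player the arm strictly prefers over `p`).  The hypothesis `hstep`
encodes one step of CA-UCB on the event `E_{t+1}`: each player either repeats its attempt
(delay) or attempts the truly best arm in its plausible set (on `E_{t+1}` the max-UCB
plausible arm is the truly best plausible arm).  If `m` is a stable matching (injective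
with no blocking pair), then `m' = m`; in particular `m'` is stable. -/
theorem preservation_of_stability
    (N L : ℕ)
    (μ : Fin N → Fin L → ℝ)
    (armpref : Fin L → Fin N → Fin N → Prop)
    (harmpref : ∀ a, IsStrictTotalOrder (Fin N) (armpref a))
    (hdistinct : ∀ p, Function.Injective (μ p))
    (m m' : Fin N → Fin L)
    (pull : Fin N → Option (Fin L))
    (plausible : Fin N → Set (Fin L))
    (hpull : ∀ (p : Fin N) (a : Fin L),
      pull p = some a ↔ (m p = a ∧ ∀ q : Fin N, m q = a → q = p ∨ armpref a p q))
    (hplaus : ∀ (p : Fin N) (a : Fin L),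
      a ∈ plausible p ↔ ∀ q : Fin N, armpref a q p → pull q ≠ some a)
    (hstep : ∀ p : Fin N, m' p = m p ∨
      (m' p ∈ plausible p ∧ ∀ a ∈ plausible p, μ p a ≤ μ p (m' p)))
    (hminj : Function.Injective m)
    (hstable : ¬ ∃ (p : Fin N) (a : Fin L),
      μ p (m p) < μ p a ∧
      ((∀ q : Fin N, m q ≠ a) ∨ (∃ q : Fin N, m q = a ∧ armpref a p q))) :
    m' = m := by
  push_neg at hstable
  -- every player successfully pulls its own arm
  have hpullself : ∀ p : Fin N, pull p = some (m p) := by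
    intro p
    rw [hpull]
    exact ⟨rfl, fun q hq => Or.inl (hminj hq)⟩
  -- m p is plausible for p
  have hmp : ∀ p : Fin N, m p ∈ plausible p := by
    intro p
    rw [hplaus]
    intro q hq hpq
    have hmq : m q = m p := by
      have := (hpull q (m p)).mp hpq
      exact this.1
    have : q = p := hminj hmq
    subst this
    exact (harmpref (m q)).irrefl q hq
  -- m p is best plausible for p
  have hbest : ∀ p : Fin N, ∀ a ∈ plausible p, μ p a ≤ μ p (m p) := by
    intro p a ha
    by_contra hlt
    push_neg at hlt
    have := hstable p a hlt
    obtain ⟨⟨q, hq⟩, hnb⟩ := this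
    rcases (or_iff_not_imp_left.2 fun h1 => or_iff_not_imp_right.2 fun h2 => (harmpref a).trichotomous q p h1 h2) with h | h | h
    · exact (hplaus p a).mp ha q h (by rw [hpullself q, hq])
    · subst h; rw [hq] at hlt; exact lt_irrefl _ hlt
    · exact hnb q hq h
  funext p
  rcases hstep p with h | ⟨h1, h2⟩
  · exact h
  · have h3 := h2 (m p) (hmp p)
    have h4 := hbest p (m' p) h1
    exact hdistinct p (le_antisymm h4 h3)
end

section
/- Deterministic CA-UCB can cycle: in the two-player two-arm market of the previous example, if both players follow deterministic conflict-avoidance (λ = 0, each player attempts the max-UCB arm among arms not won at the previous step by a player the arm prefers; a player who has never successfully pulled an arm assigns it UCB +∞) and both players attempt a_1 at time 1, then for all t ≥ 1 p_1 and p_2 attempt the same arm at every time step, alternating between a_1 and a_2, so that the stable matching {(p_1,a_1),(p_2,a_2)} is never realized at any time. -/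
open Classical in
/-- Deterministic CA-UCB (λ = 0) can cycle in the two-player two-arm market where both
players rank `a₁ ≻ a₂` (indices `0 ≻ 1`), arm `a₁` prefers `p₁` and arm `a₂` prefers
`p₂` (arm `a` strictly prefers player `q` over `p` iff `q = a ∧ p ≠ a`).  The dynamics:
`pull t p = some a` iff `p` attempts `a` at time `t` and every other attempting player is
less preferred by `a` (`hwin`); the plausible set at time `t` consists of the arms not
successfully pulled at `t−1` by a strictly preferred player (`hplaus`); `cnt t p a`
counts `p`'s successful pulls of `a` before time `t` (`hcnt1`, `hcnt`); each player
attempts an arm in its plausible set (`hatt`), and since a never-pulled arm has UCB `+∞`,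
whenever some plausible arm has count zero the attempted arm has count zero (`hinf`).
If both players attempt `a₁` at time 1, then at every time `t ≥ 1` both players attempt
the same arm (a conflict every round), alternating between `a₁` (odd `t`) and `a₂`
(even `t`); in particular the stable matching `{(p₁,a₁),(p₂,a₂)}` is never realized. -/
theorem deterministic_ca_ucb_cycles
    (attempt : ℕ → Fin 2 → Fin 2)
    (pull : ℕ → Fin 2 → Option (Fin 2))
    (S : ℕ → Fin 2 → Set (Fin 2))
    (cnt : ℕ → Fin 2 → Fin 2 → ℕ)
    (hwin : ∀ (t : ℕ) (p a : Fin 2),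
      pull t p = some a ↔ (attempt t p = a ∧
        ∀ q : Fin 2, attempt t q = a → q = p ∨ (p = a ∧ q ≠ a)))
    (hplaus : ∀ (t : ℕ) (p a : Fin 2), 2 ≤ t →
      (a ∈ S t p ↔ ∀ q : Fin 2, (q = a ∧ p ≠ a) → pull (t - 1) q ≠ some a))
    (hcnt1 : ∀ p a : Fin 2, cnt 1 p a = 0)
    (hcnt : ∀ (t : ℕ) (p a : Fin 2),
      cnt (t + 1) p a = cnt t p a + (if pull t p = some a then 1 else 0))
    (hatt : ∀ (t : ℕ) (p : Fin 2), 2 ≤ t → attempt t p ∈ S t p)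
    (hinf : ∀ (t : ℕ) (p : Fin 2), 2 ≤ t →
      ∀ a ∈ S t p, cnt t p a = 0 → cnt t p (attempt t p) = 0)
    (hinit : attempt 1 0 = 0 ∧ attempt 1 1 = 0) :
    ∀ t : ℕ, 1 ≤ t →
      (attempt t 0 = attempt t 1 ∧
        attempt t 0 = (if t % 2 = 1 then (0 : Fin 2) else 1)) ∧
      ¬ (attempt t 0 = 0 ∧ attempt t 1 = 1) := by
  have two : ∀ x : Fin 2, x = 0 ∨ x = 1 := by decide
  have hstep : ∀ t : ℕ, 1 ≤ t → ∀ a b : Fin 2,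
      ((a = 0 ∧ b = 1) ∨ (a = 1 ∧ b = 0)) →
      attempt t 0 = a → attempt t 1 = a → cnt t 0 1 = 0 → cnt t 1 0 = 0 →
      attempt (t+1) 0 = b ∧ attempt (t+1) 1 = b ∧
        cnt (t+1) 0 1 = 0 ∧ cnt (t+1) 1 0 = 0 := by
    intro t ht a b hab h0 h1 hc0 hc1
    have hab' : a ≠ b := by
      rcases hab with ⟨rfl, rfl⟩ | ⟨rfl, rfl⟩ <;> decide
    have hatta : attempt t a = a := by
      rcases two a with rfl | rfl
      · exact h0
      · exact h1
    have hattb : attempt t b = a := by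
      rcases hab with ⟨rfl, rfl⟩ | ⟨rfl, rfl⟩
      · exact h1
      · exact h0
    have hpa : pull t a = some a := by
      rw [hwin]
      refine ⟨hatta, fun q _ => ?_⟩
      by_cases h : q = a
      · exact Or.inl h
      · exact Or.inr ⟨rfl, h⟩
    have hpb_b : pull t b ≠ some b := by
      intro h
      have := ((hwin t b b).mp h).1
      rw [hattb] at this
      exact hab' this
    have hpb_a : pull t b ≠ some a := by
      intro h
      have := ((hwin t b a).mp h).2 a hatta
      rcases this with h' | ⟨h', _⟩
      · exact hab' h'
      · exact hab' h'.symm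
    have ht2 : 2 ≤ t + 1 := by omega
    have hSb : a ∉ S (t+1) b := by
      rw [hplaus (t+1) b a ht2]
      push_neg
      refine ⟨a, ⟨rfl, hab'.symm⟩, ?_⟩
      simpa using hpa
    have hneb : attempt (t+1) b ≠ a := fun h => hSb (h ▸ hatt (t+1) b ht2)
    have hattb' : attempt (t+1) b = b := by
      rcases two (attempt (t+1) b) with h | h <;>
        rcases hab with ⟨ha', hb'⟩ | ⟨ha', hb'⟩ <;> subst ha' <;> subst hb' <;>
        first
          | exact h
          | exact absurd h hneb
    have hcab : cnt (t+1) a b = 0 := by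
      have hne : pull t a ≠ some b := by
        rw [hpa]; simpa using hab'
      rw [hcnt, if_neg hne, add_zero]
      rcases hab with ⟨rfl, rfl⟩ | ⟨rfl, rfl⟩
      · exact hc0
      · exact hc1
    have hcba : cnt (t+1) b a = 0 := by
      rw [hcnt, if_neg hpb_a, add_zero]
      rcases hab with ⟨rfl, rfl⟩ | ⟨rfl, rfl⟩
      · exact hc1
      · exact hc0
    have hcaa : cnt (t+1) a a ≠ 0 := by
      rw [hcnt, if_pos hpa]; omega
    have hSab : b ∈ S (t+1) a := by
      rw [hplaus (t+1) a b ht2]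
      rintro q ⟨rfl, _⟩
      simpa using hpb_b
    have h0' : cnt (t+1) a (attempt (t+1) a) = 0 :=
      hinf (t+1) a ht2 b hSab hcab
    have hnea : attempt (t+1) a ≠ a := by
      intro h; rw [h] at h0'; exact hcaa h0'
    have hatta' : attempt (t+1) a = b := by
      rcases two (attempt (t+1) a) with h | h <;>
        rcases hab with ⟨ha', hb'⟩ | ⟨ha', hb'⟩ <;> subst ha' <;> subst hb' <;>
        first
          | exact h
          | exact absurd h hnea
    rcases hab with ⟨rfl, rfl⟩ | ⟨rfl, rfl⟩
    · exact ⟨hatta', hattb', hcab, hcba⟩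
    · exact ⟨hattb', hatta', hcba, hcab⟩
  have main : ∀ t : ℕ, 1 ≤ t →
      attempt t 0 = (if t % 2 = 1 then (0 : Fin 2) else 1) ∧
      attempt t 1 = (if t % 2 = 1 then (0 : Fin 2) else 1) ∧
      cnt t 0 1 = 0 ∧ cnt t 1 0 = 0 := by
    intro t ht
    induction t, ht using Nat.le_induction with
    | base => simp [hinit.1, hinit.2, hcnt1]
    | succ t ht ih =>
      obtain ⟨h0, h1, hc0, hc1⟩ := ih
      rcases Nat.mod_two_eq_zero_or_one t with h | h
      · rw [if_neg (by omega : ¬ t % 2 = 1)] at h0 h1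
        rw [if_pos (by omega : (t + 1) % 2 = 1)]
        exact hstep t ht 1 0 (Or.inr ⟨rfl, rfl⟩) h0 h1 hc0 hc1
      · rw [if_pos h] at h0 h1
        rw [if_neg (by omega : ¬ (t + 1) % 2 = 1)]
        exact hstep t ht 0 1 (Or.inl ⟨rfl, rfl⟩) h0 h1 hc0 hc1
  intro t ht
  obtain ⟨h0, h1, _, _⟩ := main t ht
  refine ⟨⟨h0.trans h1.symm, h0⟩, ?_⟩
  rintro ⟨e0, e1⟩
  rw [e0] at h0; rw [e1] at h1
  rw [← h1] at h0
  exact (by decide : (0 : Fin 2) ≠ 1) h0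
end
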